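/- arXiv:1908.00719 — 4 statements merged into one kernel-verified Lean document; each statement's English description precedes it below -/
import Mathlib

section
/- Higher order singular value decomposition (HOSVD) existence: every complex tensor 𝒜 of order m and dimensions I₁×I₂×…×I_m can be written as 𝒜 = 𝒮 ×₁ U⁽¹⁾ ×₂ U⁽²⁾ ×₃ … ×_m U⁽ᵐ⁾, where each U⁽ᵏ⁾ is a unitary I_k×I_k complex matrix and the core tensor 𝒮 ∈ ℂ^{I₁×…×I_m} satisfies: (i) all-orthogonality: for every mode k and every α ≠ β, the subtensors 𝒮_{i_k=α} and 𝒮_{i_k=β} have zero inner product; (ii) ordering: for every mode k, ‖𝒮_{i_k=1}‖_F ≥ ‖𝒮_{i_k=2}‖_F ≥ … ≥ ‖𝒮_{i_k=I_k}‖_F ≥ 0. -/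
/-!
For each mode `k`, the slice inner products of a tensor form the Gram matrix `G_k = T₍ₖ₎ T₍ₖ₎ᴴ`
of its mode-`k` unfolding. Writing `sliceInner T k α β = ⟪T, T ×ₖ E_αβ⟫` with a matrix unit `E_αβ`
shows that a mode-`k` product with `B` turns `G_k` into `B G_k Bᴴ`, while a unitary product in
another mode `k'` leaves `G_k` unchanged: it commutes with `×ₖ E_αβ` and preserves `⟪·, ·⟫`.
So if `V_k` diagonalises `G_k(A)` with decreasing eigenvalues, the core
`S = A ×₁ V₁ᴴ ⋯ ×ₘ V_mᴴ` has `G_k(S) = V_kᴴ G_k(A) V_k` diagonal: this is all-orthogonality, and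
the diagonal entries, the squared slice norms, are the sorted eigenvalues. Mode products in distinct
modes commute, so `A = S ×₁ V₁ ⋯ ×ₘ V_m`.
-/

open scoped BigOperators ComplexConjugate

noncomputable section

/-- The mode-`k` product of an order-`m` complex tensor `A` (with dimensions `I 0 × ⋯ × I (m-1)`)
with a matrix `B ∈ ℂ^{I k × I k}`: the entry at the multi-index obtained by replacing the
`k`-th index by `j` is `∑ i_k, A(i₁,…,i_k,…,i_m) * B(j, i_k)`. -/
def modeMul {m : ℕ} {I : Fin m → ℕ}
    (A : ((k : Fin m) → Fin (I k)) → ℂ) (k : Fin m)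
    (B : Matrix (Fin (I k)) (Fin (I k)) ℂ) :
    ((k : Fin m) → Fin (I k)) → ℂ :=
  fun i => ∑ x : Fin (I k), A (Function.update i k x) * B (i k) x

/-- `S ×₁ U⁽¹⁾ ×₂ U⁽²⁾ ×₃ ⋯ ×ₘ U⁽ᵐ⁾` : successive mode-`k` products for `k = 1, …, m`. -/
def multiModeMul {m : ℕ} {I : Fin m → ℕ}
    (S : ((k : Fin m) → Fin (I k)) → ℂ)
    (U : (k : Fin m) → Matrix (Fin (I k)) (Fin (I k)) ℂ) :
    ((k : Fin m) → Fin (I k)) → ℂ :=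
  (List.finRange m).foldl (fun T k => modeMul T k (U k)) S

/-- Inner product of the subtensors `S_{i_k = α}` and `S_{i_k = β}` (the `k`-th index fixed
to `α` resp. `β`): `∑ conj (S i) * S j` over pairs of multi-indices agreeing outside mode `k`. -/
def sliceInner {m : ℕ} {I : Fin m → ℕ}
    (S : ((k : Fin m) → Fin (I k)) → ℂ) (k : Fin m) (α β : Fin (I k)) : ℂ :=
  ∑ i ∈ Finset.univ.filter (fun i : (k : Fin m) → Fin (I k) => i k = α),
    conj (S i) * S (Function.update i k β)

/-- Squared Frobenius norm of the subtensor `S_{i_k = α}`. -/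
def sliceNormSq {m : ℕ} {I : Fin m → ℕ}
    (S : ((k : Fin m) → Fin (I k)) → ℂ) (k : Fin m) (α : Fin (I k)) : ℝ :=
  ∑ i ∈ Finset.univ.filter (fun i : (k : Fin m) → Fin (I k) => i k = α), ‖S i‖ ^ 2

/-- Frobenius norm of the subtensor `S_{i_k = α}`; for a core tensor these are the
tensor singular values `σ_α^{(k)}`. -/
def sliceNorm {m : ℕ} {I : Fin m → ℕ}
    (S : ((k : Fin m) → Fin (I k)) → ℂ) (k : Fin m) (α : Fin (I k)) : ℝ :=
  Real.sqrt (sliceNormSq S k α)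

open Matrix Function

theorem Finset.sum_sum_update_swap {ι : Type*} [Fintype ι] [DecidableEq ι] {π : ι → Type*}
    [∀ i, Fintype (π i)] {M : Type*} [AddCommMonoid M] (k : ι)
    (f : ((i : ι) → π i) → π k → M) :
    ∑ i, ∑ x, f i x = ∑ i, ∑ x, f (update i k x) (i k) := by
  have hinv : Involutive fun p : ((i : ι) → π i) × π k => (update p.1 k p.2, p.1 k) := by
    intro p
    simp
  simp only [← Fintype.sum_prod_type']
  exact (Equiv.sum_comp hinv.toPerm (fun p => f p.1 p.2)).symm

section

variable {m : ℕ} {I : Fin m → ℕ}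

theorem modeMul_one (T : ((k : Fin m) → Fin (I k)) → ℂ) (k : Fin m) : modeMul T k 1 = T := by
  funext i
  simp [modeMul, one_apply, eq_comm (a := i k)]

theorem modeMul_modeMul (T : ((k : Fin m) → Fin (I k)) → ℂ) (k : Fin m)
    (B C : Matrix (Fin (I k)) (Fin (I k)) ℂ) :
    modeMul (modeMul T k B) k C = modeMul T k (C * B) := by
  funext i
  simp only [modeMul, update_idem, update_self, mul_apply, Finset.sum_mul, Finset.mul_sum]
  rw [Finset.sum_comm]
  exact Finset.sum_congr rfl fun y _ => Finset.sum_congr rfl fun x _ => by ring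

theorem modeMul_comm (T : ((k : Fin m) → Fin (I k)) → ℂ) {k k' : Fin m} (h : k ≠ k')
    (B : Matrix (Fin (I k)) (Fin (I k)) ℂ) (C : Matrix (Fin (I k')) (Fin (I k')) ℂ) :
    modeMul (modeMul T k B) k' C = modeMul (modeMul T k' C) k B := by
  funext i
  simp only [modeMul, update_of_ne h, update_of_ne h.symm, Finset.sum_mul]
  rw [Finset.sum_comm]
  refine Finset.sum_congr rfl fun x _ => Finset.sum_congr rfl fun y _ => ?_
  rw [update_comm h]
  ring

theorem star_modeMul_dotProduct (X Y : ((k : Fin m) → Fin (I k)) → ℂ) (k : Fin m)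
    (B : Matrix (Fin (I k)) (Fin (I k)) ℂ) :
    star (modeMul X k B) ⬝ᵥ Y = star X ⬝ᵥ modeMul Y k Bᴴ := by
  simp only [dotProduct, modeMul, Pi.star_apply, star_sum, star_mul', Finset.sum_mul,
    Finset.mul_sum, conjTranspose_apply]
  rw [Finset.sum_sum_update_swap k]
  simp only [update_idem, update_eq_self, update_self]
  exact Finset.sum_congr rfl fun i _ => Finset.sum_congr rfl fun x _ => by ring

theorem star_modeMul_dotProduct_modeMul_of_mem_unitaryGroup
    (X Y : ((k : Fin m) → Fin (I k)) → ℂ) (k : Fin m)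
    {B : Matrix (Fin (I k)) (Fin (I k)) ℂ} (hB : B ∈ unitaryGroup (Fin (I k)) ℂ) :
    star (modeMul X k B) ⬝ᵥ modeMul Y k B = star X ⬝ᵥ Y := by
  rw [star_modeMul_dotProduct, modeMul_modeMul, ← star_eq_conjTranspose,
    mem_unitaryGroup_iff'.mp hB, modeMul_one]

theorem sliceInner_eq_star_dotProduct (T : ((k : Fin m) → Fin (I k)) → ℂ) (k : Fin m)
    (α β : Fin (I k)) :
    sliceInner T k α β = star T ⬝ᵥ modeMul T k (single α β 1) := by
  simp only [sliceInner, dotProduct, modeMul, Finset.sum_filter, Pi.star_apply, single_apply]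
  refine Finset.sum_congr rfl fun i _ => ?_
  split_ifs with h <;> simp [h, Ne.symm]

theorem sliceInner_self (T : ((k : Fin m) → Fin (I k)) → ℂ) (k : Fin m) (α : Fin (I k)) :
    sliceInner T k α α = sliceNormSq T k α := by
  rw [sliceInner, sliceNormSq, Complex.ofReal_sum]
  refine Finset.sum_congr rfl fun i hi => ?_
  rw [← (Finset.mem_filter.mp hi).2, update_eq_self, Complex.conj_mul', Complex.ofReal_pow]

theorem star_sliceInner (T : ((k : Fin m) → Fin (I k)) → ℂ) (k : Fin m) (α β : Fin (I k)) :
    star (sliceInner T k α β) = sliceInner T k β α := by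
  rw [sliceInner_eq_star_dotProduct, sliceInner_eq_star_dotProduct, ← star_dotProduct,
    star_modeMul_dotProduct, conjTranspose_single, star_one]

theorem star_dotProduct_modeMul_eq_sum_sliceInner (T : ((k : Fin m) → Fin (I k)) → ℂ) (k : Fin m)
    (M : Matrix (Fin (I k)) (Fin (I k)) ℂ) :
    star T ⬝ᵥ modeMul T k M = ∑ x, ∑ y, M x y * sliceInner T k x y := by
  simp only [sliceInner, dotProduct, modeMul, Pi.star_apply, Complex.star_def, Finset.mul_sum]
  rw [← Finset.sum_fiberwise Finset.univ (fun i : (j : Fin m) → Fin (I j) => i k)]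
  refine Finset.sum_congr rfl fun x _ => ?_
  rw [Finset.sum_comm]
  refine Finset.sum_congr rfl fun y _ => Finset.sum_congr rfl fun i hi => ?_
  obtain rfl := (Finset.mem_filter.mp hi).2
  ring

-- The Gram matrix `T₍ₖ₎ T₍ₖ₎ᴴ` of the mode-`k` unfolding, hence the swapped indices.
def sliceGram (T : ((k : Fin m) → Fin (I k)) → ℂ) (k : Fin m) :
    Matrix (Fin (I k)) (Fin (I k)) ℂ :=
  of fun α β => sliceInner T k β α

theorem sliceGram_apply (T : ((k : Fin m) → Fin (I k)) → ℂ) (k : Fin m) (α β : Fin (I k)) :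
    sliceGram T k α β = sliceInner T k β α :=
  rfl

theorem isHermitian_sliceGram (T : ((k : Fin m) → Fin (I k)) → ℂ) (k : Fin m) :
    (sliceGram T k).IsHermitian := by
  ext α β
  rw [conjTranspose_apply, sliceGram_apply, sliceGram_apply, star_sliceInner]

theorem sliceGram_modeMul_self (T : ((k : Fin m) → Fin (I k)) → ℂ) (k : Fin m)
    (B : Matrix (Fin (I k)) (Fin (I k)) ℂ) :
    sliceGram (modeMul T k B) k = B * sliceGram T k * Bᴴ := by
  ext α β
  rw [sliceGram_apply, sliceInner_eq_star_dotProduct, star_modeMul_dotProduct,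
    modeMul_modeMul, modeMul_modeMul, star_dotProduct_modeMul_eq_sum_sliceInner]
  have hconj : ∀ x y, (Bᴴ * single β α 1 * B : Matrix _ _ ℂ) x y = star (B β x) * B α y := by
    intro x y
    simp [mul_apply, single_apply, ite_and]
  simp only [hconj]
  simp only [mul_apply, conjTranspose_apply, sliceGram_apply, Finset.sum_mul]
  exact Finset.sum_congr rfl fun x _ => Finset.sum_congr rfl fun y _ => by ring

theorem sliceGram_modeMul_of_ne (T : ((k : Fin m) → Fin (I k)) → ℂ) {k k' : Fin m} (h : k' ≠ k)
    {B : Matrix (Fin (I k')) (Fin (I k')) ℂ} (hB : B ∈ unitaryGroup (Fin (I k')) ℂ) :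
    sliceGram (modeMul T k' B) k = sliceGram T k := by
  ext α β
  rw [sliceGram_apply, sliceGram_apply, sliceInner_eq_star_dotProduct,
    sliceInner_eq_star_dotProduct, ← modeMul_comm T h.symm,
    star_modeMul_dotProduct_modeMul_of_mem_unitaryGroup _ _ _ hB]

theorem modeMul_foldl_of_notMem {L : List (Fin m)} {k : Fin m} (hk : k ∉ L)
    (T : ((k : Fin m) → Fin (I k)) → ℂ) (U : (j : Fin m) → Matrix (Fin (I j)) (Fin (I j)) ℂ)
    (B : Matrix (Fin (I k)) (Fin (I k)) ℂ) :
    modeMul (L.foldl (fun T j => modeMul T j (U j)) T) k B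
      = L.foldl (fun T j => modeMul T j (U j)) (modeMul T k B) := by
  induction L generalizing T with
  | nil => rfl
  | cons j L ih =>
    rw [List.mem_cons, not_or] at hk
    rw [List.foldl_cons, List.foldl_cons, ih hk.2, modeMul_comm T (Ne.symm hk.1)]

theorem foldl_modeMul_foldl {L : List (Fin m)} (hL : L.Nodup) (T : ((k : Fin m) → Fin (I k)) → ℂ)
    (U W : (j : Fin m) → Matrix (Fin (I j)) (Fin (I j)) ℂ) :
    L.foldl (fun T j => modeMul T j (U j)) (L.foldl (fun T j => modeMul T j (W j)) T)
      = L.foldl (fun T j => modeMul T j (U j * W j)) T := by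
  induction L generalizing T with
  | nil => rfl
  | cons k L ih =>
    rw [List.nodup_cons] at hL
    rw [List.foldl_cons, List.foldl_cons, List.foldl_cons, modeMul_foldl_of_notMem hL.1,
      modeMul_modeMul, ih hL.2]

theorem foldl_modeMul_one (L : List (Fin m)) (T : ((k : Fin m) → Fin (I k)) → ℂ) :
    L.foldl (fun T j => modeMul T j (1 : Matrix (Fin (I j)) (Fin (I j)) ℂ)) T = T := by
  induction L generalizing T with
  | nil => rfl
  | cons k L ih => rw [List.foldl_cons, modeMul_one, ih]

theorem sliceGram_foldl_of_notMem {L : List (Fin m)} {k : Fin m} (hk : k ∉ L)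
    (T : ((k : Fin m) → Fin (I k)) → ℂ) {U : (j : Fin m) → Matrix (Fin (I j)) (Fin (I j)) ℂ}
    (hU : ∀ j, U j ∈ unitaryGroup (Fin (I j)) ℂ) :
    sliceGram (L.foldl (fun T j => modeMul T j (U j)) T) k = sliceGram T k := by
  induction L generalizing T with
  | nil => rfl
  | cons j L ih =>
    rw [List.mem_cons, not_or] at hk
    rw [List.foldl_cons, ih hk.2, sliceGram_modeMul_of_ne T (Ne.symm hk.1) (hU j)]

theorem multiModeMul_multiModeMul (T : ((k : Fin m) → Fin (I k)) → ℂ)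
    (U W : (j : Fin m) → Matrix (Fin (I j)) (Fin (I j)) ℂ) :
    multiModeMul (multiModeMul T W) U = multiModeMul T (U * W) :=
  foldl_modeMul_foldl (List.nodup_finRange m) T U W

theorem multiModeMul_one (T : ((k : Fin m) → Fin (I k)) → ℂ) : multiModeMul T 1 = T :=
  foldl_modeMul_one _ T

theorem sliceGram_multiModeMul (T : ((k : Fin m) → Fin (I k)) → ℂ)
    {U : (j : Fin m) → Matrix (Fin (I j)) (Fin (I j)) ℂ}
    (hU : ∀ j, U j ∈ unitaryGroup (Fin (I j)) ℂ) (k : Fin m) :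
    sliceGram (multiModeMul T U) k = U k * sliceGram T k * (U k)ᴴ := by
  obtain ⟨s, t, hst⟩ := List.append_of_mem (List.mem_finRange k)
  have hk : k ∉ s ++ t := by
    have := List.nodup_finRange m
    rw [hst, List.nodup_middle, List.nodup_cons] at this
    exact this.1
  rw [List.mem_append, not_or] at hk
  rw [multiModeMul, hst, List.foldl_append, List.foldl_cons, ← modeMul_foldl_of_notMem hk.2,
    sliceGram_modeMul_self, sliceGram_foldl_of_notMem hk.2 _ hU,
    sliceGram_foldl_of_notMem hk.1 _ hU]

end

theorem Matrix.star_submatrix_mul_mul_submatrix {n α : Type*} [Fintype n] [NonUnitalSemiring α]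
    [Star α] (P M : Matrix n n α) (σ : Equiv.Perm n) :
    star (P.submatrix id σ) * M * P.submatrix id σ = (star P * M * P).submatrix σ σ := by
  ext a b
  simp [mul_apply]

theorem Matrix.IsHermitian.exists_unitary_antitone_diagonal {𝕜 : Type*} [RCLike 𝕜] {n : ℕ}
    {G : Matrix (Fin n) (Fin n) 𝕜} (hG : G.IsHermitian) :
    ∃ V ∈ unitaryGroup (Fin n) 𝕜, ∃ e : Fin n → ℝ,
      Antitone e ∧ star V * G * V = diagonal (fun a => (e a : 𝕜)) := by
  set P : Matrix (Fin n) (Fin n) 𝕜 := (hG.eigenvectorUnitary : Matrix (Fin n) (Fin n) 𝕜)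
  set σ := Tuple.sort fun a => -hG.eigenvalues a
  have hdiag : star P * G * P = diagonal (RCLike.ofReal ∘ hG.eigenvalues) := by
    rw [← Unitary.conjStarAlgAut_star_apply (S := 𝕜), hG.conjStarAlgAut_star_eigenvectorUnitary]
  refine ⟨P.submatrix id σ, ?_, hG.eigenvalues ∘ σ, ?_, ?_⟩
  · have h := star_submatrix_mul_mul_submatrix P 1 σ
    rw [Matrix.mul_one, Matrix.mul_one, Unitary.coe_star_mul_self, submatrix_one_equiv] at h
    exact mem_unitaryGroup_iff'.mpr h
  · exact fun a b hab => neg_le_neg_iff.mp (Tuple.monotone_sort (fun a => -hG.eigenvalues a) hab)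
  · rw [star_submatrix_mul_mul_submatrix, hdiag, submatrix_diagonal_equiv]
    rfl

/-- **Existence of the higher order singular value decomposition (HOSVD).**
Every complex tensor `A` of order `m` and dimensions `I₁ × ⋯ × I_m` can be written as
`A = S ×₁ U⁽¹⁾ ×₂ ⋯ ×ₘ U⁽ᵐ⁾` with each `U⁽ᵏ⁾` a unitary `I_k × I_k` matrix and the core
tensor `S` all-orthogonal and with ordered (nonnegative, decreasing) slice norms. -/
theorem hosvd_exists {m : ℕ} {I : Fin m → ℕ}
    (A : ((k : Fin m) → Fin (I k)) → ℂ) :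
    ∃ (S : ((k : Fin m) → Fin (I k)) → ℂ)
      (U : (k : Fin m) → Matrix (Fin (I k)) (Fin (I k)) ℂ),
      (∀ k, U k ∈ Matrix.unitaryGroup (Fin (I k)) ℂ) ∧
      A = multiModeMul S U ∧
      (∀ (k : Fin m) (α β : Fin (I k)), α ≠ β → sliceInner S k α β = 0) ∧
      (∀ (k : Fin m) (α β : Fin (I k)), α ≤ β → sliceNorm S k β ≤ sliceNorm S k α) ∧
      (∀ (k : Fin m) (α : Fin (I k)), 0 ≤ sliceNorm S k α) := by
  choose V hV e he hdiag using
    fun k => (isHermitian_sliceGram A k).exists_unitary_antitone_diagonal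
  set S := multiModeMul A (star V)
  have hgram : ∀ k, sliceGram S k = diagonal fun a => (e k a : ℂ) := fun k => by
    rw [sliceGram_multiModeMul A (U := star V) (fun k => Unitary.star_mem (hV k)), Pi.star_apply,
      ← star_eq_conjTranspose, star_star]
    exact hdiag k
  have hsq : ∀ k α, sliceNormSq S k α = e k α := fun k α => by
    have h := sliceInner_self S k α
    rw [← sliceGram_apply, hgram, diagonal_apply_eq] at h
    exact_mod_cast h.symm
  refine ⟨S, V, hV, ?_, ?_, ?_, fun k α => Real.sqrt_nonneg _⟩
  · have hVV : V * star V = 1 := funext fun k => mem_unitaryGroup_iff.mp (hV k)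
    rw [multiModeMul_multiModeMul, hVV, multiModeMul_one]
  · intro k α β h
    rw [← sliceGram_apply, hgram, diagonal_apply_ne _ h.symm]
  · intro k α β h
    exact Real.sqrt_le_sqrt (by rw [hsq, hsq]; exact he k h)
end
end

section
/- Partial trace identities for the SWAP-like operator with a uniform first register: let M ∈ ℂ^{N×N}, let ρ₁ ∈ ℂ^{N×N} be the matrix with every entry equal to 1/N (the density matrix of the uniform superposition pure state), and let ρ₂ ∈ ℂ^{N×N} be arbitrary. Then tr₁( S_M · (ρ₁ ⊗ ρ₂) ) = (1/N)·M·ρ₂ and tr₁( (ρ₁ ⊗ ρ₂) · S_M ) = (1/N)·ρ₂·M; consequently tr₁( [S_M, ρ₁ ⊗ ρ₂] ) = (1/N)·[M, ρ₂], where [X,Y] = XY − YX. -/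
open scoped BigOperators Matrix Kronecker

/-- The SWAP-like operator `S_M = ∑_{ℓ,j} M(ℓ,j) |j⟩⟨ℓ| ⊗ |ℓ⟩⟨j|` associated with
`M ∈ ℂ^{N × N}`: its entry at row `(a,b)` and column `(c,d)` is `M(b,a)` if `c = b`
and `d = a`, and `0` otherwise. -/
def swapOp {N : ℕ} (M : Matrix (Fin N) (Fin N) ℂ) :
    Matrix (Fin N × Fin N) (Fin N × Fin N) ℂ :=
  fun p q => if q.1 = p.2 ∧ q.2 = p.1 then M p.2 p.1 else 0

/-- The partial trace over the first tensor factor: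
`(tr₁ T)(b,d) = ∑_a T((a,b),(a,d))`. -/
noncomputable def ptrace1 {N : ℕ} (T : Matrix (Fin N × Fin N) (Fin N × Fin N) ℂ) :
    Matrix (Fin N) (Fin N) ℂ :=
  fun b d => ∑ a : Fin N, T (a, b) (a, d)

/-- The density matrix of the uniform superposition pure state: every entry `1/N`. -/
noncomputable def unifRho (N : ℕ) : Matrix (Fin N) (Fin N) ℂ :=
  Matrix.of fun _ _ => (1 : ℂ) / N

/-- **Partial trace identities for the SWAP-like operator with a uniform first register:**
`tr₁(S_M (ρ₁ ⊗ ρ₂)) = (1/N) M ρ₂`, `tr₁((ρ₁ ⊗ ρ₂) S_M) = (1/N) ρ₂ M`, and consequently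
`tr₁([S_M, ρ₁ ⊗ ρ₂]) = (1/N)[M, ρ₂]`. -/
theorem ptrace1_swapOp {N : ℕ} (M : Matrix (Fin N) (Fin N) ℂ)
    (ρ₂ : Matrix (Fin N) (Fin N) ℂ) :
    ptrace1 (swapOp M * (unifRho N ⊗ₖ ρ₂)) = ((1 : ℂ) / N) • (M * ρ₂) ∧
    ptrace1 ((unifRho N ⊗ₖ ρ₂) * swapOp M) = ((1 : ℂ) / N) • (ρ₂ * M) ∧
    ptrace1 (swapOp M * (unifRho N ⊗ₖ ρ₂) - (unifRho N ⊗ₖ ρ₂) * swapOp M) =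
      ((1 : ℂ) / N) • (M * ρ₂ - ρ₂ * M) := by
  have h1 : ptrace1 (swapOp M * (unifRho N ⊗ₖ ρ₂)) = ((1 : ℂ) / N) • (M * ρ₂) := by
    ext b d
    show (∑ a : Fin N, ∑ q : Fin N × Fin N,
        swapOp M (a, b) q * (unifRho N ⊗ₖ ρ₂) q (a, d)) = _
    have key : ∀ a : Fin N,
        (∑ q : Fin N × Fin N, swapOp M (a, b) q * (unifRho N ⊗ₖ ρ₂) q (a, d))
          = (1 / N : ℂ) * (M b a * ρ₂ a d) := by
      intro a
      rw [Finset.sum_eq_single ((b, a) : Fin N × Fin N)]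
      · simp [swapOp, unifRho]; ring
      · rintro ⟨x, y⟩ _ hq
        have : ¬(x = b ∧ y = a) := by rintro ⟨rfl, rfl⟩; exact hq rfl
        simp [swapOp, this]
      · simp
    rw [Finset.sum_congr rfl fun a _ => key a]
    simp [Matrix.mul_apply, Finset.mul_sum]
  have h2 : ptrace1 ((unifRho N ⊗ₖ ρ₂) * swapOp M) = ((1 : ℂ) / N) • (ρ₂ * M) := by
    ext b d
    show (∑ a : Fin N, ∑ q : Fin N × Fin N,
        (unifRho N ⊗ₖ ρ₂) (a, b) q * swapOp M q (a, d)) = _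
    have key : ∀ a : Fin N,
        (∑ q : Fin N × Fin N, (unifRho N ⊗ₖ ρ₂) (a, b) q * swapOp M q (a, d))
          = (1 / N : ℂ) * (ρ₂ b a * M a d) := by
      intro a
      rw [Finset.sum_eq_single ((d, a) : Fin N × Fin N)]
      · simp [swapOp, unifRho]; ring
      · rintro ⟨x, y⟩ _ hq
        have : ¬(a = y ∧ d = x) := by rintro ⟨rfl, rfl⟩; exact hq rfl
        simp [swapOp, this]
      · simp
    rw [Finset.sum_congr rfl fun a _ => key a]
    simp [Matrix.mul_apply, Finset.mul_sum]
  have hsub : ptrace1 (swapOp M * (unifRho N ⊗ₖ ρ₂) - (unifRho N ⊗ₖ ρ₂) * swapOp M)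
      = ptrace1 (swapOp M * (unifRho N ⊗ₖ ρ₂)) - ptrace1 ((unifRho N ⊗ₖ ρ₂) * swapOp M) := by
    ext b d
    simp [ptrace1, Matrix.sub_apply, Finset.sum_sub_distrib]
  exact ⟨h1, h2, by rw [hsub, h1, h2, smul_sub]⟩
end

section
/- First-order qPCA expansion: let M ∈ ℂ^{N×N} be Hermitian, let ρ₁ ∈ ℂ^{N×N} be the matrix with every entry equal to 1/N, and let ρ₂ ∈ ℂ^{N×N} be arbitrary. Then the matrix-valued function f(t) := tr₁( exp(−i t S_M) · (ρ₁ ⊗ ρ₂) · exp(i t S_M) ) satisfies f(0) = ρ₂ and has derivative at t = 0 equal to −(i/N)·[M, ρ₂] = −(i/N)(Mρ₂ − ρ₂M); i.e., f(t) = ρ₂ − i(t/N)[M,ρ₂] + O(t²) as t → 0. -/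
/-!
Since `exp (u • S)` has derivative `S` at `u = 0`, the product rule gives
`f'(0) = tr₁ (-i S_M P + i P S_M)` with `P = ρ₁ ⊗ ρ₂`. Reading off entries,
`tr₁ (S_M (σ ⊗ ρ)) = (M ⊙ σ) ρ` and `tr₁ ((σ ⊗ ρ) S_M) = ρ (M ⊙ σ)`, and for the uniform
`σ = ρ₁` the Hadamard product `M ⊙ σ` is `M / N`.
-/

open scoped BigOperators Matrix Kronecker

attribute [local instance] Matrix.normedAddCommGroup Matrix.normedSpace

namespace Matrix

variable {𝕜 𝔸 : Type*} {l m n : Type*} [Fintype m]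

theorem hasDerivAt_exp_smul_const [RCLike 𝕜] [NormedRing 𝔸] [NormedAlgebra 𝕜 𝔸]
    [CompleteSpace 𝔸] [DecidableEq m] (A : Matrix m m 𝔸) (t : 𝕜) :
    HasDerivAt (fun u : 𝕜 => NormedSpace.exp (u • A)) (NormedSpace.exp (t • A) * A) t := by
  refine hasDerivAt_pi.2 fun i => hasDerivAt_pi.2 fun j => ?_
  -- The elementwise norm is not submultiplicative: differentiate in the equivalent operator norm.
  let : NormedRing (Matrix m m 𝔸) := Matrix.linftyOpNormedRing
  let : NormedAlgebra 𝕜 (Matrix m m 𝔸) := Matrix.linftyOpNormedAlgebra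
  have : @CompleteSpace (Matrix m m 𝔸) (‹NormedRing (Matrix m m 𝔸)›.toUniformSpace) :=
    inferInstanceAs (CompleteSpace (m → m → 𝔸))
  let entry : Matrix m m 𝔸 →L[𝕜] 𝔸 :=
    ⟨entryLinearMap 𝕜 𝔸 i j, (continuous_apply j).comp (continuous_apply i)⟩
  exact entry.hasFDerivAt.comp_hasDerivAt t (_root_.hasDerivAt_exp_smul_const A t)

theorem _root_.HasDerivAt.matrix_mul [NontriviallyNormedField 𝕜] [NormedRing 𝔸]
    [NormedAlgebra 𝕜 𝔸] [Fintype l] [Fintype n]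
    {f : 𝕜 → Matrix l m 𝔸} {g : 𝕜 → Matrix m n 𝔸} {f' : Matrix l m 𝔸} {g' : Matrix m n 𝔸}
    {t : 𝕜} (hf : HasDerivAt f f' t) (hg : HasDerivAt g g' t) :
    HasDerivAt (fun s => f s * g s) (f' * g t + f t * g') t := by
  refine hasDerivAt_pi.2 fun i => hasDerivAt_pi.2 fun k => ?_
  simp only [add_apply, mul_apply, ← Finset.sum_add_distrib]
  exact HasDerivAt.fun_sum fun j _ =>
    ((hasDerivAt_pi.1 (hasDerivAt_pi.1 hf i)) j).mul ((hasDerivAt_pi.1 (hasDerivAt_pi.1 hg j)) k)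

end Matrix

open Matrix

section PartialTrace

variable {N : ℕ}

theorem ptrace1_add (X Y : Matrix (Fin N × Fin N) (Fin N × Fin N) ℂ) :
    ptrace1 (X + Y) = ptrace1 X + ptrace1 Y := by
  ext b d
  simp [ptrace1, Finset.sum_add_distrib]

theorem ptrace1_smul (c : ℂ) (X : Matrix (Fin N × Fin N) (Fin N × Fin N) ℂ) :
    ptrace1 (c • X) = c • ptrace1 X := by
  ext b d
  simp [ptrace1, Finset.mul_sum]

theorem ptrace1_kronecker (σ ρ : Matrix (Fin N) (Fin N) ℂ) : ptrace1 (σ ⊗ₖ ρ) = σ.trace • ρ := by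
  ext b d
  simp [ptrace1, trace, Finset.sum_mul]

theorem HasDerivAt.ptrace1 {𝕜 : Type*} [NontriviallyNormedField 𝕜] [NormedAlgebra 𝕜 ℂ]
    {f : 𝕜 → Matrix (Fin N × Fin N) (Fin N × Fin N) ℂ}
    {f' : Matrix (Fin N × Fin N) (Fin N × Fin N) ℂ} {t : 𝕜} (hf : HasDerivAt f f' t) :
    HasDerivAt (fun s => ptrace1 (f s)) (ptrace1 f') t :=
  hasDerivAt_pi.2 fun b => hasDerivAt_pi.2 fun d => HasDerivAt.fun_sum fun a _ =>
    hasDerivAt_pi.1 (hasDerivAt_pi.1 hf (a, b)) (a, d)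

theorem ptrace1_swapOp_mul_kronecker (M σ ρ : Matrix (Fin N) (Fin N) ℂ) :
    ptrace1 (swapOp M * (σ ⊗ₖ ρ)) = (M ⊙ σ) * ρ := by
  ext b d
  simp [ptrace1, mul_apply, swapOp, Fintype.sum_prod_type, ite_and, mul_left_comm, mul_comm]

theorem ptrace1_kronecker_mul_swapOp (M σ ρ : Matrix (Fin N) (Fin N) ℂ) :
    ptrace1 ((σ ⊗ₖ ρ) * swapOp M) = ρ * (M ⊙ σ) := by
  ext b d
  simp [ptrace1, mul_apply, swapOp, Fintype.sum_prod_type, ite_and, mul_left_comm, mul_comm]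

theorem trace_unifRho (hN : N ≠ 0) : (unifRho N).trace = 1 := by
  simp [unifRho, trace, hN]

theorem hadamard_unifRho (M : Matrix (Fin N) (Fin N) ℂ) : M ⊙ unifRho N = (1 / N : ℂ) • M := by
  ext i j
  simp [unifRho, mul_comm]

theorem ptrace1_unifRho_kronecker (ρ : Matrix (Fin N) (Fin N) ℂ) :
    ptrace1 (unifRho N ⊗ₖ ρ) = ρ := by
  rcases eq_or_ne N 0 with rfl | hN
  · exact Subsingleton.elim _ _
  · rw [ptrace1_kronecker, trace_unifRho hN, one_smul]

end PartialTrace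

theorem qpca_first_order_general {N : ℕ} (M : Matrix (Fin N) (Fin N) ℂ)
    (ρ₂ : Matrix (Fin N) (Fin N) ℂ) :
    (fun t : ℝ =>
        ptrace1 (NormedSpace.exp ((-Complex.I * (t : ℂ)) • swapOp M) *
          (unifRho N ⊗ₖ ρ₂) *
          NormedSpace.exp ((Complex.I * (t : ℂ)) • swapOp M))) 0 = ρ₂ ∧
    HasDerivAt
      (fun t : ℝ =>
        ptrace1 (NormedSpace.exp ((-Complex.I * (t : ℂ)) • swapOp M) *
          (unifRho N ⊗ₖ ρ₂) *
          NormedSpace.exp ((Complex.I * (t : ℂ)) • swapOp M)))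
      ((-(Complex.I / N)) • (M * ρ₂ - ρ₂ * M)) 0 := by
  refine ⟨by simp [ptrace1_unifRho_kronecker], ?_⟩
  have hexp (c : ℂ) : HasDerivAt (fun t : ℝ => NormedSpace.exp ((c * t) • swapOp M))
      (c • swapOp M) 0 := by
    have := Matrix.hasDerivAt_exp_smul_const (c • swapOp M) (0 : ℝ)
    simp only [zero_smul, NormedSpace.exp_zero, Matrix.one_mul] at this
    convert this using 3 with t
    rw [mul_comm, ← smul_smul, Complex.coe_smul]
  convert (((hexp (-Complex.I)).matrix_mul (hasDerivAt_const 0 (unifRho N ⊗ₖ ρ₂))).matrix_mul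
    (hexp Complex.I)).ptrace1 using 1
  simp only [Complex.ofReal_zero, mul_zero, zero_smul, NormedSpace.exp_zero, Matrix.one_mul,
    Matrix.mul_one, add_zero, Matrix.smul_mul, Matrix.mul_smul, ptrace1_add,
    ptrace1_smul, ptrace1_swapOp_mul_kronecker, ptrace1_kronecker_mul_swapOp, hadamard_unifRho]
  module

/-- **First-order qPCA expansion.** For Hermitian `M ∈ ℂ^{N × N}`, uniform `ρ₁` and
arbitrary `ρ₂`, the function `f(t) = tr₁( e^{-i t S_M} (ρ₁ ⊗ ρ₂) e^{i t S_M} )` satisfies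
`f(0) = ρ₂` and `f'(0) = -(i/N)[M, ρ₂]`; i.e. `f(t) = ρ₂ - i (t/N) [M, ρ₂] + O(t²)`. -/
theorem qpca_first_order {N : ℕ} (M : Matrix (Fin N) (Fin N) ℂ) (hM : M.IsHermitian)
    (ρ₂ : Matrix (Fin N) (Fin N) ℂ) :
    (fun t : ℝ =>
        ptrace1 (NormedSpace.exp ((-Complex.I * (t : ℂ)) • swapOp M) *
          (unifRho N ⊗ₖ ρ₂) *
          NormedSpace.exp ((Complex.I * (t : ℂ)) • swapOp M))) 0 = ρ₂ ∧
    HasDerivAt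
      (fun t : ℝ =>
        ptrace1 (NormedSpace.exp ((-Complex.I * (t : ℂ)) • swapOp M) *
          (unifRho N ⊗ₖ ρ₂) *
          NormedSpace.exp ((Complex.I * (t : ℂ)) • swapOp M)))
      ((-(Complex.I / N)) • (M * ρ₂ - ρ₂ * M)) 0 :=
  qpca_first_order_general M ρ₂
end

section
/- The isometries of the QSVE data structure factor the matrix: let A ∈ ℝ^{N₁×N₂} be a matrix all of whose rows A_i are nonzero, and let P ∈ ℝ^{(N₁·N₂)×N₁}, Q ∈ ℝ^{(N₁·N₂)×N₂} be defined by P((i,j), i') = [i = i']·A(i,j)/‖A_i‖₂ and Q((i,j), j') = [j = j']·‖A_i‖₂/‖A‖_F. Then PᵀQ = A/‖A‖_F. -/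
open scoped BigOperators Matrix

/-- Euclidean norm of the `i`-th row of `A`. -/
noncomputable def rowNorm {N₁ N₂ : ℕ} (A : Matrix (Fin N₁) (Fin N₂) ℝ) (i : Fin N₁) : ℝ :=
  Real.sqrt (∑ j : Fin N₂, A i j ^ 2)

/-- Frobenius norm of `A`. -/
noncomputable def frobNorm {N₁ N₂ : ℕ} (A : Matrix (Fin N₁) (Fin N₂) ℝ) : ℝ :=
  Real.sqrt (∑ i : Fin N₁, ∑ j : Fin N₂, A i j ^ 2)

/-- The Kerenidis–Prakash factor `P ∈ ℝ^{(N₁·N₂) × N₁}`: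
`P((i,j), i') = [i = i'] · A(i,j)/‖A_i‖₂`, realizing `|i⟩|0⟩ ↦ |i⟩|A_i⟩`. -/
noncomputable def Pmat {N₁ N₂ : ℕ} (A : Matrix (Fin N₁) (Fin N₂) ℝ) :
    Matrix (Fin N₁ × Fin N₂) (Fin N₁) ℝ :=
  Matrix.of fun p i' => if p.1 = i' then A p.1 p.2 / rowNorm A p.1 else 0

/-- The Kerenidis–Prakash factor `Q ∈ ℝ^{(N₁·N₂) × N₂}`:
`Q((i,j), j') = [j = j'] · ‖A_i‖₂/‖A‖_F`, realizing `|0⟩|j⟩ ↦ |Â⟩|j⟩`. -/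
noncomputable def Qmat {N₁ N₂ : ℕ} (A : Matrix (Fin N₁) (Fin N₂) ℝ) :
    Matrix (Fin N₁ × Fin N₂) (Fin N₂) ℝ :=
  Matrix.of fun p j' => if p.2 = j' then rowNorm A p.1 / frobNorm A else 0

lemma rowNorm_ne_zero {N₁ N₂ : ℕ} (A : Matrix (Fin N₁) (Fin N₂) ℝ) (i : Fin N₁)
    (h : ∃ j, A i j ≠ 0) : rowNorm A i ≠ 0 := by
  obtain ⟨j, hj⟩ := h
  have : 0 < ∑ j' : Fin N₂, A i j' ^ 2 :=
    Finset.sum_pos' (fun k _ => sq_nonneg _) ⟨j, Finset.mem_univ _, by positivity⟩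
  exact ne_of_gt (Real.sqrt_pos.mpr this)

/-- **The isometries of the QSVE data structure factor the matrix:** if all rows of `A`
are nonzero, then `PᵀQ = A/‖A‖_F`. -/
theorem Pmat_transpose_mul_Qmat {N₁ N₂ : ℕ}
    (A : Matrix (Fin N₁) (Fin N₂) ℝ)
    (hrows : ∀ i : Fin N₁, ∃ j : Fin N₂, A i j ≠ 0) :
    (Pmat A)ᵀ * Qmat A = (frobNorm A)⁻¹ • A := by
  ext i j
  rw [Matrix.mul_apply]
  rw [Fintype.sum_prod_type]
  simp only [Matrix.transpose_apply, Pmat, Qmat, Matrix.of_apply, ite_mul, zero_mul,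
    mul_ite, mul_zero]
  rw [Finset.sum_eq_single i]
  · rw [Finset.sum_eq_single j]
    · simp only [if_pos rfl]
      have h := rowNorm_ne_zero A i (hrows i)
      simp only [if_true, Matrix.smul_apply, smul_eq_mul]
      field_simp
    · intro b _ hb; simp [hb]
    · simp
  · intro a _ ha; simp [ha]
  · simp
end
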